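/- Let D, D_c : ℝ → ℂ be continuous with D_c nowhere zero on [a, b], and suppose D(ω)·conj(D_c(ω)) + conj(D(ω))·D_c(ω) > 0 for all ω ∈ [a, b]. Then D is nowhere zero on [a, b], and if additionally D and D_c are loops, they have equal winding numbers around the origin. -/

import Mathlib

open Complex

/-- `n` is a winding number of the loop `γ : [a,b] → ℂ \ {0}` around the origin. -/
def IsWindingNumber (a b : ℝ) (γ : ℝ → ℂ) (n : ℤ) : Prop :=
  ∃ θ : ℝ → ℝ, ContinuousOn θ (Set.Icc a b) ∧
    (∀ t ∈ Set.Icc a b, γ t = (‖γ t‖ : ℂ) * Complex.exp (Complex.I * θ t)) ∧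
    θ b - θ a = 2 * Real.pi * n

/-!
The ratio `D / Dc` has real part `Re (D·conj Dc) / |Dc|²`, which is positive by hypothesis.
So `D = (D / Dc) · Dc` with a factor in the right half-plane: a continuous argument of the factor
is given by `arg`, and since the factor is a loop too, adding it to an argument of `Dc` gives an
argument of `D` with the same total increase. The hypothesis is symmetric in `D` and `Dc`, which
gives the converse.
-/

open Set ComplexConjugate

namespace Complex

lemma re_div_pos_of_re_mul_conj_add_pos {z w : ℂ} (hw : w ≠ 0)
    (h : 0 < (z * conj w + conj z * w).re) : 0 < (z / w).re := by
  have hsum : z * conj w + conj z * w = z * conj w + conj (z * conj w) := by simp [mul_comm]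
  rw [hsum, add_conj, ofReal_re] at h
  rw [div_re, ← add_div]
  refine div_pos ?_ (normSq_pos.mpr hw)
  simpa [mul_re, conj_re, conj_im, mul_comm] using h

end Complex

theorem IsWindingNumber.of_eqOn_mul {a b : ℝ} {γ δ g : ℝ → ℂ} {n : ℤ}
    (hg : ContinuousOn g (Icc a b)) (hgs : ∀ t ∈ Icc a b, g t ∈ slitPlane) (hends : g a = g b)
    (hγ : EqOn γ (g * δ) (Icc a b)) (hδ : IsWindingNumber a b δ n) :
    IsWindingNumber a b γ n := by
  obtain ⟨θ, hθc, hθ, hθn⟩ := hδ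
  refine ⟨fun t => θ t + arg (g t), ?_, fun t ht => ?_, ?_⟩
  · exact hθc.add fun t ht =>
      (continuousAt_arg (hgs t ht)).comp_continuousWithinAt (hg.continuousWithinAt ht)
  · calc γ t
        = (‖g t‖ * exp (arg (g t) * I)) * (‖δ t‖ * exp (I * θ t)) := by
          rw [norm_mul_exp_arg_mul_I, ← hθ t ht, hγ ht, Pi.mul_apply]
      _ = ‖γ t‖ * exp (I * ↑(θ t + arg (g t))) := by
          rw [hγ ht, Pi.mul_apply, norm_mul, ofReal_mul, ofReal_add, mul_add, exp_add,
            mul_comm (arg (g t) : ℂ) I]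
          ring
  · rw [add_sub_add_comm, hends, sub_self, add_zero, hθn]

lemma isWindingNumber_of_re_mul_conj_add_pos {a b : ℝ} {D Dc : ℝ → ℂ} {n : ℤ}
    (hD : ContinuousOn D (Icc a b)) (hDc : ContinuousOn Dc (Icc a b))
    (hDc0 : ∀ ω ∈ Icc a b, Dc ω ≠ 0)
    (hpos : ∀ ω ∈ Icc a b, 0 < (D ω * conj (Dc ω) + conj (D ω) * Dc ω).re)
    (hDe : D a = D b) (hDce : Dc a = Dc b) (hw : IsWindingNumber a b Dc n) :
    IsWindingNumber a b D n := by
  refine hw.of_eqOn_mul (hD.div hDc hDc0)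
    (fun t ht => Or.inl (re_div_pos_of_re_mul_conj_add_pos (hDc0 t ht) (hpos t ht)))
    (by simp only [Pi.div_apply, hDe, hDce]) fun t ht => ?_
  exact (div_mul_cancel₀ (D t) (hDc0 t ht)).symm

theorem denominator_winding_general (a b : ℝ) (D Dc : ℝ → ℂ)
    (hD : ContinuousOn D (Set.Icc a b)) (hDc : ContinuousOn Dc (Set.Icc a b))
    (hDc0 : ∀ ω ∈ Set.Icc a b, Dc ω ≠ 0)
    (hpos : ∀ ω ∈ Set.Icc a b,
      0 < (D ω * (starRingEnd ℂ) (Dc ω) + (starRingEnd ℂ) (D ω) * Dc ω).re) :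
    (∀ ω ∈ Set.Icc a b, D ω ≠ 0) ∧
    (D a = D b → Dc a = Dc b →
      ∀ n : ℤ, IsWindingNumber a b D n ↔ IsWindingNumber a b Dc n) := by
  have hD0 : ∀ ω ∈ Icc a b, D ω ≠ 0 := fun ω hω h0 => by simpa [h0] using hpos ω hω
  have hpos' : ∀ ω ∈ Icc a b, 0 < (Dc ω * conj (D ω) + conj (Dc ω) * D ω).re := fun ω hω => by
    simpa only [add_comm, mul_comm] using hpos ω hω
  refine ⟨hD0, fun hDe hDce n => ⟨?_, ?_⟩⟩
  · exact isWindingNumber_of_re_mul_conj_add_pos hDc hD hD0 hpos' hDce hDe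
  · exact isWindingNumber_of_re_mul_conj_add_pos hD hDc hDc0 hpos hDe hDce

/-- The constraint `D·conj(Dc) + conj(D)·Dc > 0` forces `D` nowhere zero and,
for loops, equal winding numbers with `Dc`. -/
theorem denominator_winding (a b : ℝ) (hab : a ≤ b) (D Dc : ℝ → ℂ)
    (hD : ContinuousOn D (Set.Icc a b)) (hDc : ContinuousOn Dc (Set.Icc a b))
    (hDc0 : ∀ ω ∈ Set.Icc a b, Dc ω ≠ 0)
    (hpos : ∀ ω ∈ Set.Icc a b,
      0 < (D ω * (starRingEnd ℂ) (Dc ω) + (starRingEnd ℂ) (D ω) * Dc ω).re) :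
    (∀ ω ∈ Set.Icc a b, D ω ≠ 0) ∧
    (D a = D b → Dc a = Dc b →
      ∀ n : ℤ, IsWindingNumber a b D n ↔ IsWindingNumber a b Dc n) :=
  denominator_winding_general a b D Dc hD hDc hDc0 hpos
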